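/- If ⟨α_i, α_j⟩ ∈ ℚ for all i, j, then the Langlands retraction preserves rationality: 𝔏(V^ℚ) ⊆ V^ℚ, where V^ℚ is the ℚ-span of the α_i. -/

import Mathlib

/-! The closest point `y` of the cone to `x` satisfies the Kuhn–Tucker conditions
`⟪x - y, ω i⟫ ≤ 0` for all `i`, with equality wherever the coefficient of `y` on `ω i` is
positive. For the set `T` of indices where the inequality is strict, expanding `x - y` along the
dual basis puts it in `W = span (b '' T)`, while `y ⊥ W`; so `x - y` is the orthogonal projection
of `x` onto `W`. Since the Gram matrix of `b` is rational and positive definite, this projection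
can be computed inside `ℚ^ι`, so it is a rational combination of the `b i`, and hence so is `y`. -/

open scoped InnerProductSpace
open Finset

/-- The closed convex cone generated by a finite family of vectors:
the set of non-negative linear combinations. -/
def coneGen {V : Type*} [AddCommGroup V] [Module ℝ V] {ι : Type*} [Fintype ι]
    (v : ι → V) : Set V :=
  {x | ∃ c : ι → ℝ, (∀ i, 0 ≤ c i) ∧ x = ∑ i, c i • v i}

/-- `y` is a point of `K` closest to `x`. -/
def IsClosestPoint {V : Type*} [NormedAddCommGroup V] (K : Set V) (x y : V) : Prop :=
  y ∈ K ∧ ∀ z ∈ K, dist x y ≤ dist x z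

section

variable {V ι : Type*} [NormedAddCommGroup V] [InnerProductSpace ℝ V]

theorem Submodule.mem_orthogonal_span_iff {s : Set V} {v : V} :
    v ∈ (Submodule.span ℝ s)ᗮ ↔ ∀ u ∈ s, ⟪u, v⟫_ℝ = 0 := by
  rw [← Submodule.span_singleton_le_iff_mem, ← Submodule.isOrtho_iff_le, Submodule.isOrtho_span]
  simp only [Set.mem_singleton_iff, forall_eq]
  exact forall₂_congr fun u _ => by rw [real_inner_comm]

section ClosestPoint

theorem IsClosestPoint.inner_sub_le_zero {K : Set V} (hK : Convex ℝ K) {x y : V}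
    (h : IsClosestPoint K x y) : ∀ w ∈ K, ⟪x - y, w - y⟫_ℝ ≤ 0 := by
  have : Nonempty K := ⟨⟨y, h.1⟩⟩
  refine (norm_eq_iInf_iff_real_inner_le_zero hK h.1).mp (le_antisymm ?_ ?_)
  · exact le_ciInf fun z => by simpa [dist_eq_norm] using h.2 z z.2
  · exact ciInf_le ⟨0, fun _ ⟨_, h⟩ => h ▸ norm_nonneg _⟩ (⟨y, h.1⟩ : K)

theorem IsClosestPoint.inner_sub_nonpos_of_mem_pointedCone {C : PointedCone ℝ V} {x y w : V}
    (h : IsClosestPoint C x y) (hw : w ∈ C) : ⟪x - y, w⟫_ℝ ≤ 0 := by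
  simpa using h.inner_sub_le_zero C.convex (w + y) (C.add_mem hw h.1)

theorem IsClosestPoint.inner_sub_self_eq_zero_of_pointedCone {C : PointedCone ℝ V} {x y : V}
    (h : IsClosestPoint C x y) : ⟪x - y, y⟫_ℝ = 0 :=
  le_antisymm (h.inner_sub_nonpos_of_mem_pointedCone h.1)
    (by simpa using h.inner_sub_le_zero C.convex 0 C.zero_mem)

variable [Fintype ι]

theorem coneGen_eq_hull (ω : ι → V) : coneGen ω = PointedCone.hull ℝ (Set.range ω) := by
  ext x
  simp only [coneGen, Set.mem_ofPred_eq, SetLike.mem_coe, PointedCone.hull,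
    Submodule.mem_span_range_iff_exists_fun]
  constructor
  · rintro ⟨c, hc, rfl⟩
    exact ⟨fun i => ⟨c i, hc i⟩, rfl⟩
  · rintro ⟨c, rfl⟩
    exact ⟨fun i => c i, fun i => (c i).2, rfl⟩

theorem IsClosestPoint.exists_coneGen_repr_mul_inner_eq_zero {ω : ι → V} {x y : V}
    (h : IsClosestPoint (coneGen ω) x y) :
    ∃ c : ι → ℝ, (∀ i, 0 ≤ c i) ∧ y = ∑ i, c i • ω i ∧ ∀ i, c i * ⟪x - y, ω i⟫_ℝ = 0 := by
  obtain ⟨c, hc, hy⟩ := h.1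
  rw [coneGen_eq_hull] at h
  have hterm : ∀ i, c i * ⟪x - y, ω i⟫_ℝ ≤ 0 := fun i => mul_nonpos_of_nonneg_of_nonpos (hc i)
    (h.inner_sub_nonpos_of_mem_pointedCone (PointedCone.subset_hull ⟨i, rfl⟩))
  have hsum : ∑ i, c i * ⟪x - y, ω i⟫_ℝ = 0 := by
    have : ⟪x - y, ∑ i, c i • ω i⟫_ℝ = 0 := by
      rw [← hy]; exact h.inner_sub_self_eq_zero_of_pointedCone
    simpa only [inner_sum, real_inner_smul_right] using this
  exact ⟨c, hc, hy, fun i => (sum_eq_zero_iff_of_nonpos fun i _ => hterm i).mp hsum i (mem_univ i)⟩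

end ClosestPoint

section RationalCombination

variable [Fintype ι]

def ratComb (v : ι → V) (c : ι → ℚ) : V := ∑ i, (c i : ℝ) • v i

variable {v : ι → V}

@[simp]
theorem ratComb_zero : ratComb v 0 = 0 := by simp [ratComb]

theorem ratComb_add (c d : ι → ℚ) : ratComb v (c + d) = ratComb v c + ratComb v d := by
  simp [ratComb, add_smul, sum_add_distrib]

theorem ratComb_sub (c d : ι → ℚ) : ratComb v (c - d) = ratComb v c - ratComb v d := by
  simp [ratComb, sub_smul, sum_sub_distrib]

theorem ratComb_smul (a : ℚ) (c : ι → ℚ) : ratComb v (a • c) = (a : ℝ) • ratComb v c := by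
  simp [ratComb, smul_sum, mul_smul]

theorem ratComb_single [DecidableEq ι] (j : ι) : ratComb v (Pi.single j 1) = v j := by
  simp [ratComb, Pi.single_apply, apply_ite (Rat.cast : ℚ → ℝ), ite_smul]

theorem inner_ratComb [DecidableEq ι] {G : Matrix ι ι ℚ} (hG : ∀ i j, ⟪v i, v j⟫_ℝ = G i j)
    (c d : ι → ℚ) : ⟪ratComb v c, ratComb v d⟫_ℝ = G.toBilin' c d := by
  simp only [ratComb, Matrix.toBilin'_apply, sum_inner, inner_sum, real_inner_smul_left,
    real_inner_smul_right, hG]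
  push_cast
  rw [sum_comm]
  exact sum_congr rfl fun i _ => sum_congr rfl fun j _ => by ring

theorem eq_zero_of_ratComb_eq_zero (hv : LinearIndependent ℝ v) {c : ι → ℚ}
    (hc : ratComb v c = 0) : c = 0 := by
  have := Fintype.linearIndependent_iff.mp hv (fun i => c i) hc
  exact funext fun i => by exact_mod_cast this i

/-- The rational Gram form `B` is anisotropic on `ℚ^ι`, hence nondegenerate on the span `U` of
the coordinate vectors in `T`; the splitting `ℚ^ι = U ⊕ B.orthogonal U` of the coefficients of
the vector is its orthogonal decomposition along `span ℝ (v '' T)`. -/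
theorem exists_starProjection_span_eq_ratComb [FiniteDimensional ℝ V]
    (hv : LinearIndependent ℝ v) (hrat : ∀ i j, ∃ q : ℚ, ⟪v i, v j⟫_ℝ = q) (T : Set ι)
    (c : ι → ℚ) : ∃ d : ι → ℚ,
      (Submodule.span ℝ (v '' T)).starProjection (ratComb v c) = ratComb v d := by
  classical
  choose G hG using hrat
  set B := (Matrix.of G).toBilin'
  have hB : ∀ c d, ⟪ratComb v c, ratComb v d⟫_ℝ = B c d := inner_ratComb hG
  have hsymm : ∀ c d, B c d = B d c := fun c d =>
    Rat.cast_injective (α := ℝ) (by rw [← hB, ← hB, real_inner_comm])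
  have hrefl : B.IsRefl := fun c d h => by rw [hsymm, h]
  set U := Submodule.span ℚ ((fun j => Pi.single j (1 : ℚ)) '' T)
  have hdisj : Disjoint U (B.orthogonal U) := by
    refine Submodule.disjoint_def.mpr fun u hu hu' => eq_zero_of_ratComb_eq_zero hv ?_
    have : B u u = 0 := hu' u hu
    exact inner_self_eq_zero.mp (by rw [hB, this, Rat.cast_zero])
  have hcompl := B.isCompl_orthogonal_of_restrict_nondegenerate hrefl
    (B.nondegenerate_restrict_of_disjoint_orthogonal hrefl hdisj)
  obtain ⟨p, hp, r, hr, rfl⟩ :=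
    Submodule.mem_sup.mp (hcompl.sup_eq_top ▸ Submodule.mem_top (x := c))
  refine ⟨p, Submodule.eq_starProjection_of_mem_of_inner_eq_zero ?_ ?_⟩
  · refine Submodule.span_induction ?_ (by simp) (fun u w _ _ hu hw => ?_)
      (fun a u _ hu => ?_) hp
    · rintro _ ⟨j, hj, rfl⟩
      exact Submodule.subset_span ⟨j, hj, by rw [ratComb_single]⟩
    · rw [ratComb_add]; exact add_mem hu hw
    · rw [ratComb_smul]; exact Submodule.smul_mem _ _ hu
  · rw [← Submodule.mem_orthogonal', Submodule.mem_orthogonal_span_iff, ratComb_add,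
      add_sub_cancel_left]
    rintro _ ⟨j, hj, rfl⟩
    rw [← ratComb_single (v := v) j, hB, hr _ (Submodule.subset_span ⟨j, hj, rfl⟩), Rat.cast_zero]

end RationalCombination

section DualBasis

variable [Fintype ι] [DecidableEq ι] {b ω : ι → V}

theorem inner_sum_smul_dual (hω : ∀ i j, ⟪ω i, b j⟫_ℝ = if i = j then 1 else 0) (c : ι → ℝ)
    (j : ι) : ⟪∑ i, c i • ω i, b j⟫_ℝ = c j := by
  simp [sum_inner, real_inner_smul_left, hω]

theorem Module.Basis.sum_inner_dual_smul (b : Module.Basis ι ℝ V)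
    (hω : ∀ i j, ⟪ω i, b j⟫_ℝ = if i = j then 1 else 0) (v : V) :
    ∑ i, ⟪v, ω i⟫_ℝ • b i = v := by
  have hcoord : ∀ i, ⟪v, ω i⟫_ℝ = b.repr v i := fun i =>
    calc ⟪v, ω i⟫_ℝ = ⟪ω i, ∑ j, b.repr v j • b j⟫_ℝ := by rw [b.sum_repr, real_inner_comm]
      _ = b.repr v i := by rw [inner_sum]; simp [real_inner_smul_right, hω]
  simp only [hcoord, b.sum_repr]

end DualBasis

end

/-- If all inner products `⟪α i, α j⟫` are rational, then the Langlands
retraction preserves rationality: `𝔏(V^ℚ) ⊆ V^ℚ` where `V^ℚ` is the ℚ-span of the `α i`. -/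
theorem langlands_retraction_rational
    {V ι : Type*} [NormedAddCommGroup V] [InnerProductSpace ℝ V] [FiniteDimensional ℝ V]
    [Fintype ι] [DecidableEq ι] (b : Module.Basis ι ℝ V) (ω : ι → V)
    (hω : ∀ i j, ⟪ω i, b j⟫_ℝ = if i = j then 1 else 0)
    (hrat : ∀ i j, ∃ q : ℚ, ⟪(b i : V), b j⟫_ℝ = (q : ℝ))
    (x : V) (hx : ∃ c : ι → ℚ, x = ∑ i, (c i : ℝ) • (b i : V))
    (y : V) (hy : IsClosestPoint (coneGen ω) x y) :
    ∃ c : ι → ℚ, y = ∑ i, (c i : ℝ) • (b i : V) := by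
  obtain ⟨c, -, hyc, hslack⟩ := hy.exists_coneGen_repr_mul_inner_eq_zero
  obtain ⟨a, hxa⟩ := hx
  replace hxa : ratComb b a = x := hxa.symm
  set T := {j | ⟪x - y, ω j⟫_ℝ ≠ 0}
  set W := Submodule.span ℝ (b '' T)
  have hxy : x - y ∈ W := by
    rw [← b.sum_inner_dual_smul hω (x - y)]
    refine Submodule.sum_mem _ fun i _ => ?_
    by_cases hi : ⟪x - y, ω i⟫_ℝ = 0
    · simp [hi]
    · exact Submodule.smul_mem _ _ (Submodule.subset_span ⟨i, hi, rfl⟩)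
  have hy_perp : y ∈ Wᗮ := by
    rw [Submodule.mem_orthogonal_span_iff]
    rintro _ ⟨j, hj, rfl⟩
    rw [real_inner_comm, hyc, inner_sum_smul_dual hω]
    exact (mul_eq_zero.mp (hslack j)).resolve_right hj
  have hproj : W.starProjection x = x - y :=
    Submodule.eq_starProjection_of_mem_of_inner_eq_zero hxy fun w hw => by
      rw [sub_sub_cancel]
      exact (Submodule.mem_orthogonal' W y).mp hy_perp w hw
  obtain ⟨d, hd⟩ := exists_starProjection_span_eq_ratComb b.linearIndependent hrat T a
  refine ⟨a - d, ?_⟩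
  change y = ratComb b (a - d)
  rw [ratComb_sub, ← hd, hxa, hproj, sub_sub_cancel]
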